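/- Evaluated at the critical point P_{ijl}(t) = (x_{ij}(y_{ijl}(t),t), y_{ijl}(t)), the phase difference θ_i - θ_k equals (p_k - p_i)(p_k - p_j)(p_l - p_k)(t - t_{ijkl}); in particular, if p_i < p_j < p_k < p_l and t < t_{ijkl}, then θ_k > θ_i at P_{ijl}(t). -/

import Mathlib

noncomputable def phase (pm cm x y t : ℝ) : ℝ := pm * x + pm ^ 2 * y + pm ^ 3 * t + cm

noncomputable def xline (pa pb ca cb y t : ℝ) : ℝ :=
  -(pa + pb) * y - (pa ^ 2 + pa * pb + pb ^ 2) * t - (ca - cb) / (pa - pb)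

noncomputable def c3s (pi pj pk ci cj ck : ℝ) : ℝ :=
  ci / ((pi - pj) * (pi - pk)) + cj / ((pj - pi) * (pj - pk)) + ck / ((pk - pi) * (pk - pj))

noncomputable def yfun (pi pj pk ci cj ck t : ℝ) : ℝ :=
  -(pi + pj + pk) * t - c3s pi pj pk ci cj ck

noncomputable def c4s (pi pj pk pl ci cj ck cl : ℝ) : ℝ :=
  ci / ((pi - pj) * (pi - pk) * (pi - pl)) + cj / ((pj - pi) * (pj - pk) * (pj - pl)) +
    ck / ((pk - pi) * (pk - pj) * (pk - pl)) + cl / ((pl - pi) * (pl - pj) * (pl - pk))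

noncomputable def tcrit4 (pi pj pk pl ci cj ck cl : ℝ) : ℝ :=
  -c4s pi pj pk pl ci cj ck cl

/-!
Write `θ_m` for the phases at a fixed point `(x, y, t)`. Divided differences are linear, and
those of `p`, `p ^ 2`, `p ^ 3` over four nodes are `0, 0, 1`, so the third divided difference
of `θ` over `i, j, k, l` is `t + c_{ijkl} = t - t_{ijkl}`. The point `P_{ijl}(t)` is where
`θ_i = θ_j = θ_l`: it is cut out by the vanishing of the first and second divided differences of
`θ`. With three of the four values equal, the third divided difference collapses to the single
term `(θ_k - θ_i) / ((p_k - p_i) (p_k - p_j) (p_k - p_l))`.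
-/

section DividedDifferences

variable {pi pj pk pl : ℝ}

lemma c3s_phase (hij : pi ≠ pj) (hik : pi ≠ pk) (hjk : pj ≠ pk) (ci cj ck x y t : ℝ) :
    c3s pi pj pk (phase pi ci x y t) (phase pj cj x y t) (phase pk ck x y t) =
      y + (pi + pj + pk) * t + c3s pi pj pk ci cj ck := by
  unfold c3s phase
  field_simp [sub_ne_zero, hij.symm, hik.symm, hjk.symm]
  ring

lemma c3s_of_eq_first_two (hij : pi ≠ pj) (hik : pi ≠ pk) (hjk : pj ≠ pk) (v w : ℝ) :
    c3s pi pj pk v v w = (w - v) / ((pk - pi) * (pk - pj)) := by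
  unfold c3s
  field_simp [sub_ne_zero, hij.symm, hik.symm, hjk.symm]
  ring

lemma c4s_phase (hij : pi ≠ pj) (hik : pi ≠ pk) (hil : pi ≠ pl)
    (hjk : pj ≠ pk) (hjl : pj ≠ pl) (hkl : pk ≠ pl) (ci cj ck cl x y t : ℝ) :
    c4s pi pj pk pl (phase pi ci x y t) (phase pj cj x y t) (phase pk ck x y t)
        (phase pl cl x y t) = t + c4s pi pj pk pl ci cj ck cl := by
  unfold c4s phase
  field_simp [sub_ne_zero, hij.symm, hik.symm, hil.symm, hjk.symm, hjl.symm, hkl.symm]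
  ring

lemma c4s_of_eq_off_third (hij : pi ≠ pj) (hik : pi ≠ pk) (hil : pi ≠ pl)
    (hjk : pj ≠ pk) (hjl : pj ≠ pl) (hkl : pk ≠ pl) (v w : ℝ) :
    c4s pi pj pk pl v v w v = (w - v) / ((pk - pi) * (pk - pj) * (pk - pl)) := by
  unfold c4s
  field_simp [sub_ne_zero, hij.symm, hik.symm, hil.symm, hjk.symm, hjl.symm, hkl.symm]
  ring

end DividedDifferences

section CriticalPoint

variable {pi pj pl : ℝ} (ci cj cl : ℝ)

lemma phase_eq_at_xline (hij : pi ≠ pj) (y t : ℝ) :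
    phase pi ci (xline pi pj ci cj y t) y t = phase pj cj (xline pi pj ci cj y t) y t := by
  unfold phase xline
  field_simp [sub_ne_zero.2 hij]
  ring

lemma phase_eq_at_Pijl (hij : pi ≠ pj) (hil : pi ≠ pl) (hjl : pj ≠ pl) (t : ℝ) :
    phase pl cl (xline pi pj ci cj (yfun pi pj pl ci cj cl t) t) (yfun pi pj pl ci cj cl t) t =
      phase pi ci (xline pi pj ci cj (yfun pi pj pl ci cj cl t) t)
        (yfun pi pj pl ci cj cl t) t := by
  set x := xline pi pj ci cj (yfun pi pj pl ci cj cl t) t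
  set y := yfun pi pj pl ci cj cl t with hy
  have hdd : c3s pi pj pl (phase pi ci x y t) (phase pj cj x y t) (phase pl cl x y t) = 0 := by
    rw [c3s_phase hij hil hjl, hy, yfun]
    ring
  rw [← phase_eq_at_xline ci cj hij, c3s_of_eq_first_two hij hil hjl, div_eq_zero_iff] at hdd
  have hD : (pl - pi) * (pl - pj) ≠ 0 :=
    mul_ne_zero (sub_ne_zero.2 hil.symm) (sub_ne_zero.2 hjl.symm)
  exact sub_eq_zero.1 (hdd.resolve_right hD)

lemma phase_sub_at_Pijl (pk ck : ℝ) (hij : pi ≠ pj) (hik : pi ≠ pk) (hil : pi ≠ pl)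
    (hjk : pj ≠ pk) (hjl : pj ≠ pl) (hkl : pk ≠ pl) (t : ℝ) :
    phase pi ci (xline pi pj ci cj (yfun pi pj pl ci cj cl t) t) (yfun pi pj pl ci cj cl t) t -
        phase pk ck (xline pi pj ci cj (yfun pi pj pl ci cj cl t) t)
          (yfun pi pj pl ci cj cl t) t =
      (pk - pi) * (pk - pj) * (pl - pk) * (t - tcrit4 pi pj pk pl ci cj ck cl) := by
  set x := xline pi pj ci cj (yfun pi pj pl ci cj cl t) t
  set y := yfun pi pj pl ci cj cl t
  have hD : (pk - pi) * (pk - pj) * (pk - pl) ≠ 0 := by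
    simp [sub_eq_zero, hik.symm, hjk.symm, hkl]
  have hdd := c4s_phase hij hik hil hjk hjl hkl ci cj ck cl x y t
  rw [← phase_eq_at_xline ci cj hij, phase_eq_at_Pijl ci cj cl hij hil hjl,
    c4s_of_eq_off_third hij hik hil hjk hjl hkl, div_eq_iff hD] at hdd
  rw [tcrit4]
  linear_combination -hdd

end CriticalPoint

/-- At the critical point P_{ijl}(t), θ_i - θ_k = (p_k-p_i)(p_k-p_j)(p_l-p_k)(t - t_{ijkl});
in particular for p_i < p_j < p_k < p_l and t < t_{ijkl}, θ_k dominates θ_i there. -/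
theorem phase_diff_at_Pijl (pi pj pk pl ci cj ck cl : ℝ)
    (hij : pi ≠ pj) (hik : pi ≠ pk) (hil : pi ≠ pl)
    (hjk : pj ≠ pk) (hjl : pj ≠ pl) (hkl : pk ≠ pl) :
    (∀ t, phase pi ci (xline pi pj ci cj (yfun pi pj pl ci cj cl t) t)
            (yfun pi pj pl ci cj cl t) t -
          phase pk ck (xline pi pj ci cj (yfun pi pj pl ci cj cl t) t)
            (yfun pi pj pl ci cj cl t) t
        = (pk - pi) * (pk - pj) * (pl - pk) * (t - tcrit4 pi pj pk pl ci cj ck cl)) ∧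
    (pi < pj → pj < pk → pk < pl →
      ∀ t, t < tcrit4 pi pj pk pl ci cj ck cl →
        phase pk ck (xline pi pj ci cj (yfun pi pj pl ci cj cl t) t)
            (yfun pi pj pl ci cj cl t) t >
          phase pi ci (xline pi pj ci cj (yfun pi pj pl ci cj cl t) t)
            (yfun pi pj pl ci cj cl t) t) := by
  refine ⟨phase_sub_at_Pijl ci cj cl pk ck hij hik hil hjk hjl hkl,
    fun hpij hpjk hpkl t ht => ?_⟩
  have hneg : (pk - pi) * (pk - pj) * (pl - pk) * (t - tcrit4 pi pj pk pl ci cj ck cl) < 0 :=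
    mul_neg_of_pos_of_neg (by apply mul_pos (mul_pos _ _) _ <;> linarith) (by linarith)
  linarith [phase_sub_at_Pijl ci cj cl pk ck hij hik hil hjk hjl hkl t]
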